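/- Let c_1, ..., c_n be real numbers (energy consumptions, possibly negative), β_0 ≥ 0 the initial state of charge, B > 0 the battery capacity, and α ∈ [0,1). Suppose (1/2)·Σ_{i=1}^n (|c_i| − c_i) ≤ (α/(2(1−α)))·Σ_{i=1}^n c_i and β_0 − Σ_{i=1}^n c_i ≥ α·B and β_0 ≤ B. Then for all indices 1 ≤ j ≤ k ≤ n, β_0 − Σ_{i=j}^k c_i ≥ 0. -/

import Mathlib

/-!
Write `c⁺`, `c⁻` for the positive and negative parts, so the harvested energy is `∑ cᵢ⁻` and
`∑ cᵢ⁺ = ∑ cᵢ + ∑ cᵢ⁻`. Any consecutive stretch consumes at most the total positive part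
`∑ cᵢ⁺`. From `β₀ ≤ B` and the final-SoC condition, `∑ cᵢ ≤ β₀ - αB ≤ (1 - α)B`, so the harvest
hypothesis gives `∑ cᵢ⁻ ≤ αB/2`. Hence every stretch consumes at most `β₀ - αB/2 ≤ β₀`.
-/

open Finset

section PosNegPart

variable {ι M : Type*} [AddCommGroup M] [Lattice M] [AddLeftMono M]

lemma sum_le_sum_posPart_of_subset {s t : Finset ι} (hst : s ⊆ t) (f : ι → M) :
    ∑ i ∈ s, f i ≤ ∑ i ∈ t, (f i)⁺ :=
  (sum_le_sum fun i _ => le_posPart (f i)).trans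
    (sum_le_sum_of_subset_of_nonneg hst fun i _ _ => posPart_nonneg (f i))

lemma sum_posPart_eq_sum_add_sum_negPart (s : Finset ι) (f : ι → M) :
    ∑ i ∈ s, (f i)⁺ = ∑ i ∈ s, f i + ∑ i ∈ s, (f i)⁻ := by
  rw [← sub_eq_iff_eq_add, ← sum_sub_distrib]
  exact sum_congr rfl fun i _ => posPart_sub_negPart (f i)

end PosNegPart

lemma half_mul_sum_abs_sub_self {ι : Type*} (s : Finset ι) (f : ι → ℝ) :
    (1 / 2) * ∑ i ∈ s, (|f i| - f i) = ∑ i ∈ s, (f i)⁻ := by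
  rw [mul_sum]
  refine sum_congr rfl fun i _ => ?_
  rw [abs_sub_eq_two_nsmul_negPart, nsmul_eq_mul]
  ring

lemma le_half_mul_of_le_mul_div_one_sub {α B S H : ℝ} (hα0 : 0 ≤ α) (hα1 : α < 1)
    (hH : H ≤ α / (2 * (1 - α)) * S) (hS : S ≤ (1 - α) * B) :
    H ≤ α * B / 2 := by
  have hpos : 0 < 1 - α := sub_pos.mpr hα1
  calc H ≤ α / (2 * (1 - α)) * S := hH
    _ ≤ α / (2 * (1 - α)) * ((1 - α) * B) := by gcongr
    _ = α * B / 2 := by field_simp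

theorem soc_feasibility_general
    (n : ℕ) (c : ℕ → ℝ) (β₀ B α : ℝ)
    (hB : 0 < B) (hα0 : 0 ≤ α) (hα1 : α < 1)
    (hharvest : (1 / 2) * ∑ i ∈ Finset.Icc 1 n, (|c i| - c i)
        ≤ (α / (2 * (1 - α))) * ∑ i ∈ Finset.Icc 1 n, c i)
    (hfinal : β₀ - ∑ i ∈ Finset.Icc 1 n, c i ≥ α * B)
    (hcap : β₀ ≤ B) :
    ∀ j k : ℕ, 1 ≤ j → j ≤ k → k ≤ n →
      0 ≤ β₀ - ∑ i ∈ Finset.Icc j k, c i := by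
  intro j k hj _ hk
  have hharvested : ∑ i ∈ Icc 1 n, (c i)⁻ ≤ α * B / 2 := by
    rw [← half_mul_sum_abs_sub_self]
    exact le_half_mul_of_le_mul_div_one_sub hα0 hα1 hharvest (by linarith)
  have hstretch : ∑ i ∈ Icc j k, c i ≤ ∑ i ∈ Icc 1 n, c i + ∑ i ∈ Icc 1 n, (c i)⁻ := by
    rw [← sum_posPart_eq_sum_add_sum_negPart]
    exact sum_le_sum_posPart_of_subset (Icc_subset_Icc hj hk) c
  linarith [mul_nonneg hα0 hB.le]

theorem soc_feasibility
    (n : ℕ) (c : ℕ → ℝ) (β₀ B α : ℝ)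
    (hβ₀ : 0 ≤ β₀) (hB : 0 < B) (hα0 : 0 ≤ α) (hα1 : α < 1)
    (hharvest : (1 / 2) * ∑ i ∈ Finset.Icc 1 n, (|c i| - c i)
        ≤ (α / (2 * (1 - α))) * ∑ i ∈ Finset.Icc 1 n, c i)
    (hfinal : β₀ - ∑ i ∈ Finset.Icc 1 n, c i ≥ α * B)
    (hcap : β₀ ≤ B) :
    ∀ j k : ℕ, 1 ≤ j → j ≤ k → k ≤ n →
      0 ≤ β₀ - ∑ i ∈ Finset.Icc j k, c i :=
  soc_feasibility_general n c β₀ B α hB hα0 hα1 hharvest hfinal hcap
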